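/- Let (u, φ, ψ, w) be a classical solution of the suspension-bridge Shear beam system in thermoelasticity of type III, let c_p > 0 be a Poincaré constant for (0,L), and define I₁(t) = ∫₀^L ( ρ u_t u + (μ/2) u² ) dx + ∫₀^L ( ρ₁ φ_t φ + (γ/2) φ² ) dx. Then for every t > 0, dI₁(t)/dt ≤ −α ∫₀^L u_x² dx − λ ∫₀^L (φ−u)² dx − (K/2) ∫₀^L (φ_x+ψ)² dx − (b/2) ∫₀^L ψ_x² dx + ρ ∫₀^L u_t² dx + ρ₁ ∫₀^L φ_t² dx + C₁ ∫₀^L w_{xt}² dx, where C₁ = β²c_p/(2K) + β²c_p²/(2b). -/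

import Mathlib

open MeasureTheory Set

noncomputable section

/-!
Differentiating `I1` under the integral sign and substituting equations (i) and (ii), its
integrand differs from
  `-α u_x² - λ (φ - u)² - K (φ_x + ψ)² - b ψ_x² + ρ u_t² + ρ₁ φ_t² + β φ_x w_t`
by the `x`-derivative of the flux `α u u_x + K φ (φ_x + ψ) - β φ w_t + b ψ ψ_x`, once (iii)
has traded `K ψ (φ_x + ψ)` for `b ψ ψ_xx`; the flux vanishes at both ends by the Dirichlet
conditions. The coupling term `β φ_x w_t = β (φ_x + ψ) w_t - β ψ w_t` is absorbed by two
weighted Young inequalities followed by the Poincaré inequality for `ψ` and for `w_t`, which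
vanishes at the ends because `w` does at all times.
-/

/-- Partial derivative with respect to the time variable (second argument). -/
def pdt (f : ℝ → ℝ → ℝ) (x t : ℝ) : ℝ := deriv (fun s => f x s) t

/-- Partial derivative with respect to the space variable (first argument). -/
def pdx (f : ℝ → ℝ → ℝ) (x t : ℝ) : ℝ := deriv (fun y => f y t) x

structure IsShearSolution (L ρ α lm μ ρ₁ K γ b ρ₃ δ κ β : ℝ)
    (u φ ψ w : ℝ → ℝ → ℝ) : Prop where
  smooth_u : ContDiff ℝ 3 (fun p : ℝ × ℝ => u p.1 p.2)
  smooth_phi : ContDiff ℝ 3 (fun p : ℝ × ℝ => φ p.1 p.2)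
  smooth_psi : ContDiff ℝ 3 (fun p : ℝ × ℝ => ψ p.1 p.2)
  smooth_w : ContDiff ℝ 3 (fun p : ℝ × ℝ => w p.1 p.2)
  eq1 : ∀ x ∈ Ioo (0:ℝ) L, ∀ t : ℝ, 0 < t →
    ρ * pdt (pdt u) x t - α * pdx (pdx u) x t - lm * (φ x t - u x t)
      + μ * pdt u x t = 0
  eq2 : ∀ x ∈ Ioo (0:ℝ) L, ∀ t : ℝ, 0 < t →
    ρ₁ * pdt (pdt φ) x t - K * pdx (fun y s => pdx φ y s + ψ y s) x t
      + lm * (φ x t - u x t) + γ * pdt φ x t + β * pdx (pdt w) x t = 0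
  eq3 : ∀ x ∈ Ioo (0:ℝ) L, ∀ t : ℝ, 0 < t →
    -b * pdx (pdx ψ) x t + K * (pdx φ x t + ψ x t) = 0
  eq4 : ∀ x ∈ Ioo (0:ℝ) L, ∀ t : ℝ, 0 < t →
    ρ₃ * pdt (pdt w) x t - δ * pdx (pdx w) x t + β * pdx (pdt φ) x t
      - κ * pdx (pdx (pdt w)) x t = 0
  bc : ∀ t : ℝ, 0 ≤ t →
    u 0 t = 0 ∧ u L t = 0 ∧ φ 0 t = 0 ∧ φ L t = 0 ∧
    ψ 0 t = 0 ∧ ψ L t = 0 ∧ w 0 t = 0 ∧ w L t = 0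

def energy (L ρ α lm ρ₁ K b ρ₃ δ : ℝ) (u φ ψ w : ℝ → ℝ → ℝ) (t : ℝ) : ℝ :=
  (1/2) * ∫ x in (0:ℝ)..L,
    (ρ * (pdt u x t)^2 + α * (pdx u x t)^2 + lm * (φ x t - u x t)^2
      + ρ₁ * (pdt φ x t)^2 + K * (pdx φ x t + ψ x t)^2 + b * (pdx ψ x t)^2
      + ρ₃ * (pdt w x t)^2 + δ * (pdx w x t)^2)

def I1 (L ρ μ ρ₁ γ : ℝ) (u φ : ℝ → ℝ → ℝ) (t : ℝ) : ℝ :=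
  (∫ x in (0:ℝ)..L, (ρ * pdt u x t * u x t + μ / 2 * (u x t)^2))
    + ∫ x in (0:ℝ)..L, (ρ₁ * pdt φ x t * φ x t + γ / 2 * (φ x t)^2)

def I2 (L ρ₃ κ β : ℝ) (φ w : ℝ → ℝ → ℝ) (t : ℝ) : ℝ :=
  ρ₃ * (∫ x in (0:ℝ)..L, pdt w x t * w x t)
    + κ / 2 * (∫ x in (0:ℝ)..L, (pdx w x t)^2)
    + β * ∫ x in (0:ℝ)..L, pdx φ x t * w x t

open Function

section PartialDerivatives

variable {f : ℝ → ℝ → ℝ}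

theorem hasDerivAt_pdt (hf : ContDiff ℝ 1 (uncurry f)) (x t : ℝ) :
    HasDerivAt (fun s => f x s) (pdt f x t) t :=
  ((hf.differentiable one_ne_zero).differentiableAt.comp t
    (by fun_prop : DifferentiableAt ℝ (fun s : ℝ => (x, s)) t)).hasDerivAt

theorem hasDerivAt_pdx (hf : ContDiff ℝ 1 (uncurry f)) (x t : ℝ) :
    HasDerivAt (fun y => f y t) (pdx f x t) x :=
  ((hf.differentiable one_ne_zero).differentiableAt.comp x
    (by fun_prop : DifferentiableAt ℝ (fun y : ℝ => (y, t)) x)).hasDerivAt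

theorem pdt_eq_fderiv (hf : Differentiable ℝ (uncurry f)) (x t : ℝ) :
    pdt f x t = fderiv ℝ (uncurry f) (x, t) (0, 1) :=
  ((hf (x, t)).hasFDerivAt.comp_hasDerivAt t
    ((hasDerivAt_const t x).prodMk (hasDerivAt_id t))).deriv

theorem pdx_eq_fderiv (hf : Differentiable ℝ (uncurry f)) (x t : ℝ) :
    pdx f x t = fderiv ℝ (uncurry f) (x, t) (1, 0) := by
  have h := (hf (x, t)).hasFDerivAt.comp_hasDerivAt x
    ((hasDerivAt_id x).prodMk (hasDerivAt_const x t))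
  exact h.deriv

theorem ContDiff.uncurry_pdt {m n : WithTop ℕ∞} (hf : ContDiff ℝ n (uncurry f))
    (hmn : m + 1 ≤ n) : ContDiff ℝ m (uncurry (pdt f)) := by
  have hd : Differentiable ℝ (uncurry f) :=
    (hf.of_le (le_trans le_add_self hmn)).differentiable one_ne_zero
  rw [show uncurry (pdt f) = fun p => fderiv ℝ (uncurry f) p (0, 1) from
    funext fun p => pdt_eq_fderiv hd p.1 p.2]
  exact (hf.fderiv_right hmn).clm_apply contDiff_const

theorem ContDiff.uncurry_pdx {m n : WithTop ℕ∞} (hf : ContDiff ℝ n (uncurry f))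
    (hmn : m + 1 ≤ n) : ContDiff ℝ m (uncurry (pdx f)) := by
  have hd : Differentiable ℝ (uncurry f) :=
    (hf.of_le (le_trans le_add_self hmn)).differentiable one_ne_zero
  rw [show uncurry (pdx f) = fun p => fderiv ℝ (uncurry f) p (1, 0) from
    funext fun p => pdx_eq_fderiv hd p.1 p.2]
  exact (hf.fderiv_right hmn).clm_apply contDiff_const

theorem ContDiff.uncurry_right {n : WithTop ℕ∞} (hf : ContDiff ℝ n (uncurry f)) (t : ℝ) :
    ContDiff ℝ n fun x => f x t :=
  hf.comp (contDiff_id.prodMk contDiff_const)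

theorem pdt_eq_zero_of_forall_nonneg {x t : ℝ} (ht : 0 < t) (h : ∀ s, 0 ≤ s → f x s = 0) :
    pdt f x t = 0 := by
  have hev : (fun s => f x s) =ᶠ[nhds t] fun _ => 0 :=
    Filter.eventually_of_mem (Ici_mem_nhds ht) h
  simpa [pdt] using hev.deriv_eq

end PartialDerivatives

theorem hasDerivAt_intervalIntegral_of_continuous {G G' : ℝ → ℝ → ℝ} {a b : ℝ}
    (hG : Continuous fun p : ℝ × ℝ => G p.1 p.2)
    (hG' : Continuous fun p : ℝ × ℝ => G' p.1 p.2)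
    (hd : ∀ x s, HasDerivAt (fun s => G x s) (G' x s) s) (t : ℝ) :
    HasDerivAt (fun s => ∫ x in a..b, G x s) (∫ x in a..b, G' x t) t := by
  obtain ⟨M, hM⟩ := (isCompact_Icc.prod (isCompact_Icc (a := t - 1) (b := t + 1))
    ).exists_bound_of_continuousOn (s := uIcc a b ×ˢ _) hG'.continuousOn
  refine (intervalIntegral.hasDerivAt_integral_of_dominated_loc_of_deriv_le
    (F := fun s x => G x s) (F' := fun s x => G' x s) (bound := fun _ => M)
    (Metric.ball_mem_nhds t one_pos)
    (Filter.Eventually.of_forall fun s => (hG.uncurry_right s).aestronglyMeasurable)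
    ((hG.uncurry_right t).intervalIntegrable a b)
    (hG'.uncurry_right t).aestronglyMeasurable
    (Filter.Eventually.of_forall fun x hx s hs => hM (x, s) ⟨Ioc_subset_Icc_self hx, ?_⟩)
    intervalIntegrable_const
    (Filter.Eventually.of_forall fun x _ s _ => hd x s)).2
  rw [Metric.mem_ball, Real.dist_eq, abs_lt] at hs
  constructor <;> linarith

theorem hasDerivAt_integral_pdt_mul_add_sq {f : ℝ → ℝ → ℝ} (hf : ContDiff ℝ 2 (uncurry f))
    (a b m c t : ℝ) :
    HasDerivAt (fun s => ∫ x in a..b, (m * pdt f x s * f x s + c / 2 * (f x s) ^ 2))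
      (∫ x in a..b, ((m * pdt (pdt f) x t + c * pdt f x t) * f x t + m * pdt f x t ^ 2)) t := by
  have hf1 : ContDiff ℝ 1 (uncurry f) := hf.of_le (by norm_num)
  have hft : ContDiff ℝ 1 (uncurry (pdt f)) := hf.uncurry_pdt (by norm_num)
  have cf : Continuous fun p : ℝ × ℝ => f p.1 p.2 := hf1.continuous
  have cft : Continuous fun p : ℝ × ℝ => pdt f p.1 p.2 := hft.continuous
  have cftt : Continuous fun p : ℝ × ℝ => pdt (pdt f) p.1 p.2 :=
    (hft.uncurry_pdt (m := 0) (by norm_num)).continuous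
  refine hasDerivAt_intervalIntegral_of_continuous
    (G' := fun x s => (m * pdt (pdt f) x s + c * pdt f x s) * f x s + m * pdt f x s ^ 2)
    (by fun_prop) (by fun_prop) (fun x s => ?_) t
  refine (((hasDerivAt_pdt hft x s).const_mul m).mul (hasDerivAt_pdt hf1 x s)).add
    (((hasDerivAt_pdt hf1 x s).pow 2).const_mul (c / 2)) |>.congr_deriv ?_
  push_cast
  ring

theorem mul_le_half_mul_sq_add_sq_div {c : ℝ} (hc : 0 < c) (a b : ℝ) :
    a * b ≤ c / 2 * a ^ 2 + b ^ 2 / (2 * c) := by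
  have key : c / 2 * a ^ 2 + b ^ 2 / (2 * c) - a * b = (c * a - b) ^ 2 / (2 * c) := by
    field_simp
    ring
  have : 0 ≤ (c * a - b) ^ 2 / (2 * c) := by positivity
  linarith

theorem integral_mul_le_of_poincare {a b p q c β : ℝ} (hab : a ≤ b) (hp : 0 < p) (hq : 0 < q)
    (hc : 0 < c) {f g h g' h' : ℝ → ℝ} (hf : Continuous f) (hg : Continuous g)
    (hh : Continuous h)
    (hg' : ∫ x in a..b, g x ^ 2 ≤ c * ∫ x in a..b, g' x ^ 2)
    (hh' : ∫ x in a..b, h x ^ 2 ≤ c * ∫ x in a..b, h' x ^ 2) :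
    β * ∫ x in a..b, f x * h x
      ≤ p / 2 * (∫ x in a..b, (f x + g x) ^ 2) + q / 2 * (∫ x in a..b, g' x ^ 2)
        + (β ^ 2 * c / (2 * p) + β ^ 2 * c ^ 2 / (2 * q)) * ∫ x in a..b, h' x ^ 2 := by
  have hpt : ∀ x, β * (f x * h x) ≤ p / 2 * (f x + g x) ^ 2 + q / (2 * c) * g x ^ 2
      + (β ^ 2 / (2 * p) + c * β ^ 2 / (2 * q)) * h x ^ 2 := fun x =>
    calc β * (f x * h x) = (f x + g x) * (β * h x) + g x * (-(β * h x)) := by ring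
      _ ≤ p / 2 * (f x + g x) ^ 2 + (β * h x) ^ 2 / (2 * p)
          + ((q / c) / 2 * g x ^ 2 + (-(β * h x)) ^ 2 / (2 * (q / c))) :=
        add_le_add (mul_le_half_mul_sq_add_sq_div hp _ _)
          (mul_le_half_mul_sq_add_sq_div (div_pos hq hc) _ _)
      _ = _ := by field_simp; ring
  calc β * ∫ x in a..b, f x * h x
      ≤ ∫ x in a..b, (p / 2 * (f x + g x) ^ 2 + q / (2 * c) * g x ^ 2
          + (β ^ 2 / (2 * p) + c * β ^ 2 / (2 * q)) * h x ^ 2) := by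
        rw [← intervalIntegral.integral_const_mul]
        exact intervalIntegral.integral_mono_on hab
          (Continuous.intervalIntegrable (by fun_prop) _ _)
          (Continuous.intervalIntegrable (by fun_prop) _ _) fun x _ => hpt x
    _ = p / 2 * (∫ x in a..b, (f x + g x) ^ 2) + q / (2 * c) * (∫ x in a..b, g x ^ 2)
          + (β ^ 2 / (2 * p) + c * β ^ 2 / (2 * q)) * ∫ x in a..b, h x ^ 2 := by
        simp (disch := exact Continuous.intervalIntegrable (by fun_prop) _ _) only
          [intervalIntegral.integral_add, intervalIntegral.integral_const_mul]
    _ ≤ p / 2 * (∫ x in a..b, (f x + g x) ^ 2) + q / (2 * c) * (c * ∫ x in a..b, g' x ^ 2)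
          + (β ^ 2 / (2 * p) + c * β ^ 2 / (2 * q)) * (c * ∫ x in a..b, h' x ^ 2) := by
        gcongr
    _ = _ := by field_simp

namespace IsShearSolution

variable {L ρ α lm μ ρ₁ K γ b ρ₃ δ κ β : ℝ} {u φ ψ w : ℝ → ℝ → ℝ}
  (hsol : IsShearSolution L ρ α lm μ ρ₁ K γ b ρ₃ δ κ β u φ ψ w)
include hsol

theorem hasDerivAt_flux {x t : ℝ} (hx : x ∈ Ioo 0 L) (ht : 0 < t) :
    HasDerivAt (fun y => α * (u y t * pdx u y t) + K * (φ y t * (pdx φ y t + ψ y t))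
        - β * (φ y t * pdt w y t) + b * (ψ y t * pdx ψ y t))
      ((ρ * pdt (pdt u) x t + μ * pdt u x t) * u x t + ρ * pdt u x t ^ 2
        + ((ρ₁ * pdt (pdt φ) x t + γ * pdt φ x t) * φ x t + ρ₁ * pdt φ x t ^ 2)
        - (-(α * pdx u x t ^ 2) - lm * (φ x t - u x t) ^ 2 - K * (pdx φ x t + ψ x t) ^ 2
          - b * pdx ψ x t ^ 2 + ρ * pdt u x t ^ 2 + ρ₁ * pdt φ x t ^ 2
          + β * (pdx φ x t * pdt w x t))) x := by
  have hu := hasDerivAt_pdx (hsol.smooth_u.of_le (by norm_num)) x t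
  have hux := hasDerivAt_pdx (hsol.smooth_u.uncurry_pdx (m := 1) (by norm_num)) x t
  have hφ := hasDerivAt_pdx (hsol.smooth_phi.of_le (by norm_num)) x t
  have hΦ := hasDerivAt_pdx (f := fun y s => pdx φ y s + ψ y s)
    ((hsol.smooth_phi.uncurry_pdx (m := 1) (by norm_num)).add
      (hsol.smooth_psi.of_le (by norm_num))) x t
  have hwt := hasDerivAt_pdx (hsol.smooth_w.uncurry_pdt (m := 1) (by norm_num)) x t
  have hψ := hasDerivAt_pdx (hsol.smooth_psi.of_le (by norm_num)) x t
  have hψx := hasDerivAt_pdx (hsol.smooth_psi.uncurry_pdx (m := 1) (by norm_num)) x t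
  refine ((((hu.mul hux).const_mul α).add ((hφ.mul hΦ).const_mul K)).sub
    ((hφ.mul hwt).const_mul β)).add ((hψ.mul hψx).const_mul b) |>.congr_deriv ?_
  linear_combination -(u x t * hsol.eq1 x hx t ht + φ x t * hsol.eq2 x hx t ht
    + ψ x t * hsol.eq3 x hx t ht)

theorem integral_I1_deriv_eq (hL : 0 ≤ L) {t : ℝ} (ht : 0 < t) :
    (∫ x in (0:ℝ)..L, ((ρ * pdt (pdt u) x t + μ * pdt u x t) * u x t + ρ * pdt u x t ^ 2))
      + (∫ x in (0:ℝ)..L,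
          ((ρ₁ * pdt (pdt φ) x t + γ * pdt φ x t) * φ x t + ρ₁ * pdt φ x t ^ 2))
    = -(α * ∫ x in (0:ℝ)..L, (pdx u x t)^2)
      - lm * (∫ x in (0:ℝ)..L, (φ x t - u x t)^2)
      - K * (∫ x in (0:ℝ)..L, (pdx φ x t + ψ x t)^2)
      - b * (∫ x in (0:ℝ)..L, (pdx ψ x t)^2)
      + ρ * (∫ x in (0:ℝ)..L, (pdt u x t)^2)
      + ρ₁ * (∫ x in (0:ℝ)..L, (pdt φ x t)^2)
      + β * ∫ x in (0:ℝ)..L, pdx φ x t * pdt w x t := by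
  have cu := (hsol.smooth_u.continuous).uncurry_right t
  have cut := (hsol.smooth_u.uncurry_pdt (m := 0) (by norm_num)).continuous.uncurry_right t
  have cutt := ((hsol.smooth_u.uncurry_pdt (m := 1) (by norm_num)).uncurry_pdt (m := 0)
    (by norm_num)).continuous.uncurry_right t
  have cux := (hsol.smooth_u.uncurry_pdx (m := 0) (by norm_num)).continuous.uncurry_right t
  have cφ := (hsol.smooth_phi.continuous).uncurry_right t
  have cφt := (hsol.smooth_phi.uncurry_pdt (m := 0) (by norm_num)).continuous.uncurry_right t
  have cφtt := ((hsol.smooth_phi.uncurry_pdt (m := 1) (by norm_num)).uncurry_pdt (m := 0)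
    (by norm_num)).continuous.uncurry_right t
  have cφx := (hsol.smooth_phi.uncurry_pdx (m := 0) (by norm_num)).continuous.uncurry_right t
  have cψ := (hsol.smooth_psi.continuous).uncurry_right t
  have cψx := (hsol.smooth_psi.uncurry_pdx (m := 0) (by norm_num)).continuous.uncurry_right t
  have cwt := (hsol.smooth_w.uncurry_pdt (m := 0) (by norm_num)).continuous.uncurry_right t
  obtain ⟨hu0, huL, hφ0, hφL, hψ0, hψL, -, -⟩ := hsol.bc t ht.le
  have hflux := intervalIntegral.integral_eq_sub_of_hasDerivAt_of_le hL
    (Continuous.continuousOn (by fun_prop)) (fun x hx => hsol.hasDerivAt_flux hx ht)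
    (Continuous.intervalIntegrable (by fun_prop) _ _)
  simp only [hu0, huL, hφ0, hφL, hψ0, hψL, zero_mul, mul_zero, add_zero,
    sub_self] at hflux
  simp (disch := exact Continuous.intervalIntegrable (by fun_prop) _ _) only
    [intervalIntegral.integral_add, intervalIntegral.integral_sub, intervalIntegral.integral_neg,
      intervalIntegral.integral_const_mul] at hflux ⊢
  linarith

end IsShearSolution

theorem I1_derivative_estimate_general
    {L ρ α lm μ ρ₁ K γ b ρ₃ δ κ β c_p : ℝ}
    (hL : 0 < L) (hK : 0 < K) (hb : 0 < b) (hcp : 0 < c_p)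
    (hpoin : ∀ f : ℝ → ℝ, ContDiff ℝ 1 f → f 0 = 0 → f L = 0 →
      (∫ x in (0:ℝ)..L, (f x)^2) ≤ c_p * ∫ x in (0:ℝ)..L, (deriv f x)^2)
    {u φ ψ w : ℝ → ℝ → ℝ}
    (hsol : IsShearSolution L ρ α lm μ ρ₁ K γ b ρ₃ δ κ β u φ ψ w) :
    ∀ t : ℝ, 0 < t →
      ∃ d : ℝ, HasDerivAt (I1 L ρ μ ρ₁ γ u φ) d t ∧
        d ≤ -(α * ∫ x in (0:ℝ)..L, (pdx u x t)^2)
          - lm * (∫ x in (0:ℝ)..L, (φ x t - u x t)^2)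
          - K / 2 * (∫ x in (0:ℝ)..L, (pdx φ x t + ψ x t)^2)
          - b / 2 * (∫ x in (0:ℝ)..L, (pdx ψ x t)^2)
          + ρ * (∫ x in (0:ℝ)..L, (pdt u x t)^2)
          + ρ₁ * (∫ x in (0:ℝ)..L, (pdt φ x t)^2)
          + (β^2 * c_p / (2 * K) + β^2 * c_p^2 / (2 * b))
              * (∫ x in (0:ℝ)..L, (pdx (pdt w) x t)^2) := by
  intro t ht
  refine ⟨_,
    (hasDerivAt_integral_pdt_mul_add_sq (hsol.smooth_u.of_le (by norm_num)) 0 L ρ μ t).add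
      (hasDerivAt_integral_pdt_mul_add_sq (hsol.smooth_phi.of_le (by norm_num)) 0 L ρ₁ γ t),
    ?_⟩
  rw [hsol.integral_I1_deriv_eq hL.le ht]
  obtain ⟨-, -, -, -, hψ0, hψL, -, -⟩ := hsol.bc t ht.le
  have hwt0 : pdt w 0 t = 0 :=
    pdt_eq_zero_of_forall_nonneg ht fun s hs => (hsol.bc s hs).2.2.2.2.2.2.1
  have hwtL : pdt w L t = 0 :=
    pdt_eq_zero_of_forall_nonneg ht fun s hs => (hsol.bc s hs).2.2.2.2.2.2.2
  have hwt := hsol.smooth_w.uncurry_pdt (m := 1) (by norm_num)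
  have hcoupling := integral_mul_le_of_poincare (β := β)
    (g' := fun x => pdx ψ x t) (h' := fun x => pdx (pdt w) x t) hL.le hK hb hcp
    ((hsol.smooth_phi.uncurry_pdx (m := 0) (by norm_num)).continuous.uncurry_right t)
    (hsol.smooth_psi.continuous.uncurry_right t) (hwt.continuous.uncurry_right t)
    (hpoin _ ((hsol.smooth_psi.of_le (by norm_num)).uncurry_right t) hψ0 hψL)
    (hpoin _ (hwt.uncurry_right t) hwt0 hwtL)
  linarith

/-- derivative estimate for the functional I₁. -/
theorem I1_derivative_estimate
    {L ρ α lm μ ρ₁ K γ b ρ₃ δ κ β c_p : ℝ}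
    (hL : 0 < L) (hρ : 0 < ρ) (hα : 0 < α) (hlm : 0 < lm) (hμ : 0 < μ)
    (hρ₁ : 0 < ρ₁) (hK : 0 < K) (hγ : 0 < γ) (hb : 0 < b) (hρ₃ : 0 < ρ₃)
    (hδ : 0 < δ) (hκ : 0 < κ) (hβ : β ≠ 0) (hcp : 0 < c_p)
    (hpoin : ∀ f : ℝ → ℝ, ContDiff ℝ 1 f → f 0 = 0 → f L = 0 →
      (∫ x in (0:ℝ)..L, (f x)^2) ≤ c_p * ∫ x in (0:ℝ)..L, (deriv f x)^2)
    {u φ ψ w : ℝ → ℝ → ℝ}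
    (hsol : IsShearSolution L ρ α lm μ ρ₁ K γ b ρ₃ δ κ β u φ ψ w) :
    ∀ t : ℝ, 0 < t →
      ∃ d : ℝ, HasDerivAt (I1 L ρ μ ρ₁ γ u φ) d t ∧
        d ≤ -(α * ∫ x in (0:ℝ)..L, (pdx u x t)^2)
          - lm * (∫ x in (0:ℝ)..L, (φ x t - u x t)^2)
          - K / 2 * (∫ x in (0:ℝ)..L, (pdx φ x t + ψ x t)^2)
          - b / 2 * (∫ x in (0:ℝ)..L, (pdx ψ x t)^2)
          + ρ * (∫ x in (0:ℝ)..L, (pdt u x t)^2)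
          + ρ₁ * (∫ x in (0:ℝ)..L, (pdt φ x t)^2)
          + (β^2 * c_p / (2 * K) + β^2 * c_p^2 / (2 * b))
              * (∫ x in (0:ℝ)..L, (pdx (pdt w) x t)^2) :=
  I1_derivative_estimate_general hL hK hb hcp hpoin hsol
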